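/- arXiv:1205.6066 — 2 statements merged into one kernel-verified Lean document; each statement's English description precedes it below -/
import Mathlib

section
/- Let N ∈ dg^S consist of free modules with zero differential and let M = Cone(1_{N[−1]}), the componentwise mapping cone of the identity of the shift N[−1] (a contractible complex with underlying graded module N ⊕ N[−1]). Then for every chain map α : M ⟶ U A, the morphism j̄ : A ⟶ A⟨M,α⟩ is a composite j̄ = j₁ ≫ j₂ of two elementary standard cofibrations: there exist an object A₁ of 𝒞 and morphisms j₁ : A ⟶ A₁ and j₂ : A₁ ⟶ A⟨M,α⟩ with j̄ = j₁ ≫ j₂, such that each of j₁ and j₂ is, up to composing with an isomorphism of its target, a morphism of the form j̄ : B ⟶ B⟨M',α'⟩ for some M' ∈ dg^S consisting of free modules with zero differential and some chain map α' : M' ⟶ U B. -/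
open CategoryTheory CategoryTheory.Limits CochainComplex CochainComplex.HomComplex

noncomputable section

universe u

/-- The category `dg^S` of `S`-indexed families of cochain complexes of `k`-modules. -/
abbrev DGS (k : Type u) [CommRing k] (S : Type u) : Type _ :=
  S → CochainComplex (ModuleCat.{u} k) ℤ

variable {k : Type u} [CommRing k] {S : Type u}

namespace DGS

/-- The componentwise mapping cone of a morphism of `DGS k S`. -/
def coneFun {M N : DGS k S} (α : M ⟶ N) : DGS k S :=
  fun x => CochainComplex.mappingCone (α x)

/-- The inclusion of the second summand into the componentwise mapping cone. -/
def coneInr {M N : DGS k S} (α : M ⟶ N) : N ⟶ coneFun α :=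
  fun x => CochainComplex.mappingCone.inr (α x)

/-- Componentwise shift. -/
def shift (M : DGS k S) (a : ℤ) : DGS k S := fun x => (M x)⟦a⟧

/-- The componentwise mapping cone of the identity. -/
def coneId (N : DGS k S) : DGS k S := coneFun (𝟙 N)

/-- The inclusion of the second summand in the cone of the identity. -/
def coneIdInr (N : DGS k S) : N ⟶ coneId N := coneInr (𝟙 N)


/-- The zero morphism in `DGS k S` (componentwise zero chain map). -/
def zeroHom (M N : DGS k S) : M ⟶ N := fun _ => 0

/-- `M : DGS k S` consists of free modules with zero differential. -/
def IsFree (M : DGS k S) : Prop :=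
  (∀ (x : S) (n m : ℤ), (M x).d n m = 0) ∧ ∀ (x : S) (n : ℤ), Module.Free k ((M x).X n)

/-- A family `t` of degree `-1` maps `M ⟶ B` satisfies `t d + d t = β` (componentwise). -/
def IsNullHomotopy {M B : DGS k S} (β : M ⟶ B)
    (t : ∀ x : S, Cochain (M x) (B x) (-1)) : Prop :=
  ∀ x : S, δ (-1) 0 (t x) = Cochain.ofHom (β x)

end DGS

variable {𝒞 : Type (u + 1)} [Category.{u} 𝒞] [HasLimits 𝒞] [HasColimits 𝒞]
  (F : DGS k S ⥤ 𝒞) (U : 𝒞 ⥤ DGS k S) (adj : F ⊣ U)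

/-- The degree `-1` family of maps `θ : M → U(A⟨M,α⟩)`. -/
def theta {M : DGS k S} {A : 𝒞} (α : M ⟶ U.obj A) {D : 𝒞}
    (g : F.obj (DGS.coneFun α) ⟶ D) (x : S) : Cochain (M x) ((U.obj D) x) (-1) :=
  (mappingCone.inl (α x)).comp
    (Cochain.ofHom ((adj.unit.app (DGS.coneFun α) ≫ U.map g) x)) (add_zero (-1))

/-- The complex `k` concentrated in degree `0`. -/
def unitComplex (k : Type u) [CommRing k] : CochainComplex (ModuleCat.{u} k) ℤ :=
  (HomologicalComplex.single (ModuleCat.{u} k) (ComplexShape.up ℤ) 0).obj (ModuleCat.of k k)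

/-- The object `K_x` of `DGS k S`: the cone of the identity of `k` in the component `x`,
and `0` elsewhere. -/
def Kx [DecidableEq S] (x : S) : DGS k S :=
  fun y => if y = x then CochainComplex.mappingCone (𝟙 (unitComplex k))
    else (HomologicalComplex.single (ModuleCat.{u} k) (ComplexShape.up ℤ) 0).obj
      (ModuleCat.of k PUnit)

/-- `f` is a weak equivalence: `U f` is a componentwise quasi-isomorphism. -/
def IsWeakEq {X Y : 𝒞} (f : X ⟶ Y) : Prop :=
  ∀ x : S, QuasiIso ((U.map f) x)

/-- `f` is a fibration: `U f` is surjective in every degree, in every component. -/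
def IsFib {X Y : 𝒞} (f : X ⟶ Y) : Prop :=
  ∀ (x : S) (n : ℤ), Function.Surjective (((U.map f) x).f n)

/-- `f` is a cofibration: it has the left lifting property with respect to all
trivial fibrations. -/
def IsCof {X Y : 𝒞} (f : X ⟶ Y) : Prop :=
  ∀ ⦃P Q : 𝒞⦄ (y : P ⟶ Q), IsFib U y → IsWeakEq U y → HasLiftingProperty f y



/-- `j : B ⟶ E` is an elementary standard cofibration: it is (the structure morphism of)
a pushout `B ⟶ B⟨M,α⟩` for some `M` consisting of free modules with zero differential. -/
def IsElemStdCof {B E : 𝒞} (j : B ⟶ E) : Prop :=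
  ∃ (M : DGS k S) (α : M ⟶ U.obj B) (g : F.obj (DGS.coneFun α) ⟶ E),
    DGS.IsFree M ∧ IsPushout (adj.counit.app B) (F.map (DGS.coneInr α)) j g

/-!
For `φ : N⟦-1⟧ ⟶ Q`, a chain map `α : Cone(φ) ⟶ X` restricts to `α₁ = inr φ ≫ α : Q ⟶ X`, and its
remaining component, a cochain of degree `-1` on `N⟦-1⟧`, combines with `φ` into a chain map
`β : N ⟶ Cone(α₁)`. As graded objects `Cone(β)` and `Cone(α)` are both `N⟦1⟧ ⊕ Q⟦1⟧ ⊕ X`, and up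
to signs the identity between them is a chain isomorphism compatible with the inclusions of `X`.

Hence the pushout attaching `Cone(α)` to `A` is obtained in two steps: attach `Cone(α₁)`, giving
`j₁ : A ⟶ A₁`, then push out along `F Cone(α₁) ⟶ F Cone(β)`. Through the adjunction the second
step is the elementary attachment `A₁ ⟶ A₁⟨N, β'⟩` for the adjoint transpose `β'` of `β`. For the
cone of `1_{N⟦-1⟧}` both `N` and `Q = N⟦-1⟧` are free with zero differential.
-/

namespace CochainComplex

section Shift

variable {C : Type*} [Category C] [Preadditive C] (N : CochainComplex C ℤ)

def toShiftNegOne : Cochain N (N⟦(-1 : ℤ)⟧) 1 :=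
  (Cochain.ofHom (𝟙 N)).rightShift (-1) 1 (by omega)

def fromShiftNegOne : Cochain (N⟦(-1 : ℤ)⟧) N (-1) :=
  (Cochain.ofHom (𝟙 N)).leftShift (-1) (-1) (by omega)

@[simp]
lemma δ_toShiftNegOne : δ 1 2 (toShiftNegOne N) = 0 := by
  rw [toShiftNegOne, Cochain.δ_rightShift _ (-1) 1 2 (by omega) 1 (by omega), δ_ofHom,
    Cochain.rightShift_zero, smul_zero]

@[simp]
lemma δ_fromShiftNegOne : δ (-1) 0 (fromShiftNegOne N) = 0 := by
  rw [fromShiftNegOne, Cochain.δ_leftShift _ (-1) (-1) 0 (by omega) 1 (by omega), δ_ofHom,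
    Cochain.leftShift_zero, smul_zero]

lemma toShiftNegOne_comp_fromShiftNegOne :
    (toShiftNegOne N).comp (fromShiftNegOne N) (add_neg_cancel 1) = Cochain.ofHom (𝟙 N) := by
  ext p : 1
  rw [Cochain.comp_v _ _ (add_neg_cancel 1) p (p + 1) p rfl (by omega), toShiftNegOne,
    fromShiftNegOne, Cochain.rightShift_v _ _ _ _ p (p + 1) rfl p (add_zero p),
    Cochain.leftShift_v _ _ _ _ (p + 1) p (by omega) p (add_zero p),
    show Int.negOnePow _ = 1 by decide, one_smul]
  simp only [Cochain.ofHom_v, HomologicalComplex.id_f, Category.id_comp, Category.comp_id]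
  simp [shiftFunctorObjXIso, HomologicalComplex.XIsoOfEq]

lemma fromShiftNegOne_comp_toShiftNegOne :
    (fromShiftNegOne N).comp (toShiftNegOne N) (neg_add_cancel 1) =
      Cochain.ofHom (𝟙 (N⟦(-1 : ℤ)⟧)) := by
  ext p : 1
  rw [Cochain.comp_v _ _ (neg_add_cancel 1) p (p + -1) p rfl (by omega), toShiftNegOne,
    fromShiftNegOne, Cochain.rightShift_v _ _ _ _ (p + -1) p (by omega) (p + -1) (add_zero _),
    Cochain.leftShift_v _ _ _ _ p (p + -1) rfl (p + -1) (add_zero _),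
    show Int.negOnePow _ = 1 by decide, one_smul]
  simp only [Cochain.ofHom_v, HomologicalComplex.id_f, Category.id_comp, Category.comp_id]
  simp [shiftFunctorObjXIso, HomologicalComplex.XIsoOfEq]

@[simp]
lemma fromShiftNegOne_comp_toShiftNegOne_assoc {K : CochainComplex C ℤ} {d e : ℤ}
    (γ : Cochain (N⟦(-1 : ℤ)⟧) K d) (he : 1 + d = e) :
    (fromShiftNegOne N).comp ((toShiftNegOne N).comp γ he)
      (by rw [← he, neg_add_cancel_left]) = γ := by
  rw [← Cochain.comp_assoc _ _ _ (neg_add_cancel 1) (by omega) (by omega),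
    fromShiftNegOne_comp_toShiftNegOne, Cochain.id_comp]

@[simp]
lemma toShiftNegOne_comp_fromShiftNegOne_assoc {K : CochainComplex C ℤ} {d e : ℤ}
    (γ : Cochain N K d) (he : -1 + d = e) :
    (toShiftNegOne N).comp ((fromShiftNegOne N).comp γ he)
      (by rw [← he, add_neg_cancel_left]) = γ := by
  rw [← Cochain.comp_assoc _ _ _ (add_neg_cancel 1) (by omega) (by omega),
    toShiftNegOne_comp_fromShiftNegOne, Cochain.id_comp]

end Shift

namespace mappingCone

variable {C : Type*} [Category C] [Preadditive C] [HasBinaryBiproducts C]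

section

variable {F G K : CochainComplex C ℤ} {φ : F ⟶ G}

lemma hom_ext_of_inl_inr {g₁ g₂ : mappingCone φ ⟶ K}
    (h₁ : (inl φ).comp (Cochain.ofHom g₁) (add_zero _) =
      (inl φ).comp (Cochain.ofHom g₂) (add_zero _))
    (h₂ : inr φ ≫ g₁ = inr φ ≫ g₂) : g₁ = g₂ :=
  Cochain.ofHom_injective ((ext_cochain_from_iff φ (-1) 0 (neg_add_cancel 1)).2
    ⟨h₁, by simpa only [Cochain.ofHom_comp] using congrArg Cochain.ofHom h₂⟩)

lemma δ_inl_comp_ofHom (g : mappingCone φ ⟶ K) :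
    δ (-1) 0 ((inl φ).comp (Cochain.ofHom g) (add_zero _)) =
      Cochain.ofHom (φ ≫ inr φ ≫ g) := by
  simp

lemma eq_fst_comp_add_snd_comp {n : ℤ} (γ : Cochain (mappingCone φ) K n) (m : ℤ)
    (hm : -1 + n = m) :
    γ = (fst φ).1.comp ((inl φ).comp γ hm) (by omega) +
      (snd φ).comp ((Cochain.ofHom (inr φ)).comp γ (zero_add n)) (zero_add n) := by
  conv_lhs => rw [← Cochain.id_comp γ, ← mappingCone.id φ]
  rw [Cochain.add_comp, Cochain.comp_assoc _ _ _ (add_neg_cancel 1) hm (by omega),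
    Cochain.comp_assoc_of_first_is_zero_cochain]

end

section

variable {K₁ L₁ K₂ L₂ : CochainComplex C ℤ} (φ₁ : K₁ ⟶ L₁) (φ₂ : K₂ ⟶ L₂) (a : K₁ ⟶ K₂)
  (b : L₁ ⟶ L₂) (comm : φ₁ ≫ b = a ≫ φ₂)

@[simp]
lemma inl_comp_ofHom_map :
    (inl φ₁).comp (Cochain.ofHom (map φ₁ φ₂ a b comm)) (add_zero _) =
      (Cochain.ofHom a).comp (inl φ₂) (zero_add _) := by
  simp [map]

@[simp]
lemma inr_comp_map : inr φ₁ ≫ map φ₁ φ₂ a b comm = b ≫ inr φ₂ := by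
  simp [map]

lemma ofHom_inr_comp_ofHom_map :
    (Cochain.ofHom (inr φ₁)).comp (Cochain.ofHom (map φ₁ φ₂ a b comm)) (zero_add 0) =
      Cochain.ofHom (b ≫ inr φ₂) := by
  rw [← Cochain.ofHom_comp, inr_comp_map]

end

lemma isPushout_inr_map {M X Y : CochainComplex C ℤ} (β : M ⟶ X) (f : X ⟶ Y) :
    IsPushout f (inr β) (inr (β ≫ f)) (map β (β ≫ f) (𝟙 M) f (by simp)) := by
  have w : CommSq f (inr β) (inr (β ≫ f)) (map β (β ≫ f) (𝟙 M) f (by simp)) := ⟨by simp⟩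
  refine IsPushout.of_isColimit' w (PushoutCocone.IsColimit.mk w.w
    (fun s => desc (β ≫ f) ((inl β).comp (Cochain.ofHom s.inr) (add_zero _)) s.inl
      (by rw [δ_inl_comp_ofHom, Category.assoc, s.condition]))
    (fun s => by simp) (fun s => ?_) (fun s m hm₁ hm₂ => ?_))
  · apply hom_ext_of_inl_inr
    · rw [Cochain.ofHom_comp, ← Cochain.comp_assoc_of_second_is_zero_cochain]
      simp
    · rw [reassoc_of% inr_comp_map, inr_desc, s.condition]
  · apply hom_ext_of_inl_inr
    · rw [inl_desc, ← hm₂, Cochain.ofHom_comp, ← Cochain.comp_assoc_of_second_is_zero_cochain]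
      simp
    · simpa using hm₁

section

variable {N Q X : CochainComplex C ℤ} (φ : N⟦(-1 : ℤ)⟧ ⟶ Q) (α : mappingCone φ ⟶ X)

def secondAttach : N ⟶ mappingCone (inr φ ≫ α) :=
  lift (inr φ ≫ α)
    (Cocycle.mk ((toShiftNegOne N).comp (Cochain.ofHom φ) (add_zero 1)) 2 rfl (by simp))
    (-(toShiftNegOne N).comp ((inl φ).comp (Cochain.ofHom α) (add_zero _)) (add_neg_cancel 1))
    (by simp [δ_comp _ _ (add_neg_cancel 1) 2 0 1 rfl rfl (neg_add_cancel 1),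
      Cochain.ofHom_comp])

lemma ofHom_secondAttach :
    Cochain.ofHom (secondAttach φ α) =
      (toShiftNegOne N).comp ((Cochain.ofHom φ).comp (inl (inr φ ≫ α)) (zero_add _))
        (add_neg_cancel 1) -
      (toShiftNegOne N).comp ((inl φ).comp ((Cochain.ofHom α).comp
        (Cochain.ofHom (inr (inr φ ≫ α))) (zero_add 0)) (add_zero _)) (add_neg_cancel 1) := by
  simp [secondAttach, liftCochain, sub_eq_add_neg]

lemma δ_secondAttachIso_hom_inl :
    δ (-1) 0 (-(toShiftNegOne N).comp ((inl φ).comp (inl α) (by omega : (-1 : ℤ) + -1 = -2))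
      (by omega : 1 + (-2 : ℤ) = -1)) =
      Cochain.ofHom (secondAttach φ α ≫ map (inr φ ≫ α) α (inr φ) (𝟙 X) (by simp)) := by
  rw [δ_neg, δ_comp (toShiftNegOne N) ((inl φ).comp (inl α) (by omega)) (by omega) 2 (-1) 0
      (by omega) (by omega) (by omega), δ_toShiftNegOne, Cochain.zero_comp, smul_zero, add_zero,
    δ_comp (inl φ) (inl α) (by omega) 0 0 (-1) (by omega) (by omega) (by omega), δ_inl, δ_inl,
    Cochain.ofHom_comp (secondAttach φ α), ofHom_secondAttach]
  simp only [Cochain.ofHom_comp, Cochain.sub_comp, Cochain.comp_add,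
    Cochain.comp_assoc_of_first_is_zero_cochain, Cochain.comp_assoc_of_second_is_zero_cochain,
    Cochain.comp_assoc_of_third_is_zero_cochain, inl_comp_ofHom_map, ofHom_inr_comp_ofHom_map,
    Category.id_comp, Cochain.comp_neg, Int.negOnePow_neg, Int.negOnePow_one, Units.neg_smul,
    one_smul]
  abel

lemma δ_secondAttachIso_inv_inl :
    δ (-1) 0 (-(fst φ).1.comp ((fromShiftNegOne N).comp (inl (secondAttach φ α))
        (by omega : (-1 : ℤ) + -1 = -2)) (by omega : 1 + (-2 : ℤ) = -1) +
      (snd φ).comp ((inl (inr φ ≫ α)).comp (Cochain.ofHom (inr (secondAttach φ α)))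
        (add_zero _)) (zero_add _)) =
      Cochain.ofHom (α ≫ inr (inr φ ≫ α) ≫ inr (secondAttach φ α)) := by
  rw [eq_fst_comp_add_snd_comp (Cochain.ofHom (α ≫ _)) (-1) (add_zero _), δ_add, δ_neg,
    δ_comp (fst φ).1 _ (by omega) 2 (-1) 0 (by omega) (by omega) (by omega),
    Cocycle.δ_eq_zero, Cochain.zero_comp, smul_zero, add_zero,
    δ_comp (fromShiftNegOne N) (inl (secondAttach φ α)) (by omega) 0 0 (-1) (by omega)
      (by omega) (by omega),
    δ_fromShiftNegOne, Cochain.zero_comp, smul_zero, add_zero, δ_inl,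
    δ_zero_cochain_comp _ _ _ (neg_add_cancel 1), δ_snd, δ_comp_ofHom, δ_inl]
  simp only [Cochain.ofHom_comp, ofHom_secondAttach, Cochain.sub_comp,
    Cochain.comp_assoc_of_first_is_zero_cochain, Cochain.comp_assoc_of_second_is_zero_cochain,
    Cochain.comp_assoc_of_third_is_zero_cochain, fromShiftNegOne_comp_toShiftNegOne_assoc,
    Cochain.neg_comp, Cochain.comp_sub, Int.negOnePow_neg, Int.negOnePow_one, Units.neg_smul,
    one_smul]
  abel

def secondAttachIso : mappingCone (secondAttach φ α) ≅ mappingCone α where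
  hom := desc _ _ _ (δ_secondAttachIso_hom_inl φ α)
  inv := desc _ _ _ (δ_secondAttachIso_inv_inl φ α)
  hom_inv_id := by
    apply hom_ext_of_inl_inr
    · rw [Cochain.ofHom_comp, ← Cochain.comp_assoc_of_second_is_zero_cochain, inl_desc]
      simp
    · rw [reassoc_of% inr_desc]
      apply hom_ext_of_inl_inr
      · rw [Cochain.ofHom_comp, ← Cochain.comp_assoc_of_second_is_zero_cochain,
          inl_comp_ofHom_map]
        simp
      · simp [reassoc_of% inr_comp_map]
  inv_hom_id := by
    apply hom_ext_of_inl_inr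
    · rw [Cochain.ofHom_comp, ← Cochain.comp_assoc_of_second_is_zero_cochain, inl_desc]
      simpa using (eq_fst_comp_add_snd_comp (inl α) (-2) (by omega)).symm
    · simp

lemma inr_comp_inr_comp_secondAttachIso_hom :
    inr (inr φ ≫ α) ≫ inr (secondAttach φ α) ≫ (secondAttachIso φ α).hom = inr α := by
  simp [secondAttachIso]

end

end mappingCone

end CochainComplex

namespace CategoryTheory

lemma IsPushout.of_comp_isIso {C : Type*} [Category C] {Z X Y Y' P : C} {f : Z ⟶ X}
    {i : Z ⟶ Y} {e : Y ⟶ Y'} [IsIso e] {j : X ⟶ P} {h : Y' ⟶ P}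
    (H : IsPushout f (i ≫ e) j h) : IsPushout f i j (e ≫ h) :=
  H.of_iso (Iso.refl _) (Iso.refl _) (asIso e).symm (Iso.refl _) (by simp) (by simp) (by simp)
    (by simp)

lemma isPushout_pi {I : Type*} {C : I → Type*} [∀ i, Category (C i)] {W X Y Z : ∀ i, C i}
    {f : W ⟶ X} {g : W ⟶ Y} {h : X ⟶ Z} {k : Y ⟶ Z}
    (H : ∀ i, IsPushout (f i) (g i) (h i) (k i)) : IsPushout f g h k := by
  have w : CommSq f g h k := ⟨funext fun i => (H i).w⟩
  refine IsPushout.of_isColimit' w (PushoutCocone.IsColimit.mk w.w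
    (fun s i => (H i).desc (s.inl i) (s.inr i) (congrFun s.condition i))
    (fun s => funext fun i => (H i).inl_desc _ _ _)
    (fun s => funext fun i => (H i).inr_desc _ _ _)
    (fun s m hm₁ hm₂ => funext fun i => (H i).hom_ext ?_ ?_))
  · rw [(H i).inl_desc]
    exact congrFun hm₁ i
  · rw [(H i).inr_desc]
    exact congrFun hm₂ i

end CategoryTheory

namespace DGS

lemma IsFree.shift {N : DGS k S} (hN : N.IsFree) (a : ℤ) : (N.shift a).IsFree :=
  ⟨fun x n m => by
    rw [DGS.shift, CochainComplex.shiftFunctor_obj_d', hN.1 x, smul_zero]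
    rfl,
   fun x n => hN.2 x (n + a)⟩

lemma isPushout_coneInr_comp {M V W : DGS k S} (β : M ⟶ V) (f : V ⟶ W) :
    IsPushout f (coneInr β) (coneInr (β ≫ f))
      (fun x => mappingCone.map (β x) (β x ≫ f x) (𝟙 _) (f x) (by simp)) :=
  isPushout_pi fun x => mappingCone.isPushout_inr_map (β x) (f x)

end DGS

lemma isElemStdCof_of_isPushout {𝒞 : Type (u + 1)} [Category.{u} 𝒞] {F : DGS k S ⥤ 𝒞}
    {U : 𝒞 ⥤ DGS k S} (adj : F ⊣ U) {M V : DGS k S} (hM : M.IsFree) (β : M ⟶ V) {B E : 𝒞}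
    {g₁ : F.obj V ⟶ B} {j : B ⟶ E} {h : F.obj (DGS.coneFun β) ⟶ E}
    (H : IsPushout g₁ (F.map (DGS.coneInr β)) j h) : IsElemStdCof F U adj j := by
  have := adj.leftAdjoint_preservesColimits
  have hg₁ : F.map (adj.homEquiv _ _ g₁) ≫ adj.counit.app B = g₁ := by
    simp [Adjunction.homEquiv_unit]
  exact ⟨M, β ≫ adj.homEquiv _ _ g₁, _, hM,
    IsPushout.of_left' (hg₁ ▸ H) ((DGS.isPushout_coneInr_comp β _).map F)⟩

theorem exists_isElemStdCof_comp_isElemStdCof {𝒞 : Type (u + 1)} [Category.{u} 𝒞]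
    [HasPushouts 𝒞] {F : DGS k S ⥤ 𝒞} {U : 𝒞 ⥤ DGS k S} (adj : F ⊣ U)
    {N Q : DGS k S} (hN : N.IsFree) (hQ : Q.IsFree) (φ : N.shift (-1) ⟶ Q) {A : 𝒞}
    (α : DGS.coneFun φ ⟶ U.obj A) {D : 𝒞} {jbar : A ⟶ D} {g : F.obj (DGS.coneFun α) ⟶ D}
    (hpo : IsPushout (adj.counit.app A) (F.map (DGS.coneInr α)) jbar g) :
    ∃ (A₁ : 𝒞) (j₁ : A ⟶ A₁) (j₂ : A₁ ⟶ D),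
      j₁ ≫ j₂ = jbar ∧ IsElemStdCof F U adj j₁ ∧ IsElemStdCof F U adj j₂ := by
  let α₁ : Q ⟶ U.obj A := DGS.coneInr φ ≫ α
  let β : N ⟶ DGS.coneFun α₁ := fun x => mappingCone.secondAttach (φ x) (α x)
  let e : DGS.coneFun β ⟶ DGS.coneFun α := fun x => (mappingCone.secondAttachIso (φ x) (α x)).hom
  have : IsIso e := (isIso_pi_iff e).2 fun x => (mappingCone.secondAttachIso _ _).isIso_hom
  have he : F.map (DGS.coneInr α) =
      F.map (DGS.coneInr α₁) ≫ F.map (DGS.coneInr β) ≫ F.map e := by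
    rw [← F.map_comp, ← F.map_comp]
    exact congrArg F.map
      (funext fun x => (mappingCone.inr_comp_inr_comp_secondAttachIso_hom (φ x) (α x)).symm)
  have sq₁ := IsPushout.of_hasPushout (adj.counit.app A) (F.map (DGS.coneInr α₁))
  have sq₂ := IsPushout.of_top' (he ▸ hpo) sq₁
  exact ⟨_, _, _, sq₁.inl_desc _ _ _, ⟨Q, α₁, _, hQ, sq₁⟩,
    isElemStdCof_of_isPushout adj hN β sq₂.of_comp_isIso⟩

section
variable {A : 𝒞}

/-- If `N` consists of free modules with zero differential and `M = Cone(1_{N[-1]})`,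
then for every `α : M ⟶ U A` the morphism `j̄ : A ⟶ A⟨M,α⟩` is a composition of two
elementary standard cofibrations. -/
theorem jbar_comp_of_two_elementary (N : DGS k S) (hN : DGS.IsFree N)
    (α : DGS.coneId (DGS.shift N (-1)) ⟶ U.obj A) {D : 𝒞} (jbar : A ⟶ D)
    (g : F.obj (DGS.coneFun α) ⟶ D)
    (hpo : IsPushout (adj.counit.app A) (F.map (DGS.coneInr α)) jbar g) :
    ∃ (A₁ : 𝒞) (j₁ : A ⟶ A₁) (j₂ : A₁ ⟶ D),
      j₁ ≫ j₂ = jbar ∧ IsElemStdCof F U adj j₁ ∧ IsElemStdCof F U adj j₂ :=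
  exists_isElemStdCof_comp_isElemStdCof adj hN (hN.shift (-1)) (𝟙 _) α hpo

end
end
end

section
/- Let r : A ⟶ Y be a morphism of 𝒞. Let N ∈ dg^S be the subcomplex of cycles of the componentwise mapping cone Cone((U r)[−1]) of the shifted map (U r)[−1] : (U A)[−1] ⟶ (U Y)[−1], equipped with the zero differential; concretely, in each component N consists of the pairs (u, yσ^{−1}) ∈ (U A) ⊕ (U Y)[−1] with u d = 0 and u·(U r) − y·d = 0. Let pr₁ : N ⟶ U A be the chain map projecting to the first summand, and let D = A⟨N, pr₁⟩. Then: (1) the pair (r, t), where t is the degree −1 family of maps N → U Y given by projection pr₂ to the second summand (U Y)[−1] followed by σ : (U Y)[−1] → U Y, is an element of h_{A,pr₁}(Y); (2) the morphism q : D ⟶ Y corresponding to (r, t) under the representability bijection satisfies j̄ ≫ q = r; and (3) the chain map Cone((U r)[−1]) ⟶ Cone((U q)[−1]) given by U j̄ on the first summand and the identity of (U Y)[−1] on the second summand sends every cycle of Cone((U r)[−1]) to a boundary of Cone((U q)[−1]). -/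
/-!
An element `(f, t)` of `h_{A,α}(B)` is the same as a chain map `Cone(α) ⟶ U B` restricting to
`U f` on `U A` (`mappingCone.desc`). Its adjoint `F(Cone(α)) ⟶ B` and `f` agree on `F(U A)`, so
they descend along the pushout to `q : A⟨M,α⟩ ⟶ B`; the canonical degree `-1` map `θ` is a
null-homotopy of `α ≫ U j̄`, and `θ ≫ U q = t`.

For `α = pr₁` the cycle condition `(U r) u = d y` says exactly that `pr₂` is a null-homotopy of
`pr₁ ≫ U r`, which gives `q`. Since `N` has zero differential, `a = θ(u, y)` satisfies
`d a = (U j̄) u` and `(U q) a = pr₂ (u, y) = y`, so `(a, 0)` bounds the image of `(u, y)`.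
-/

open CategoryTheory CategoryTheory.Limits CochainComplex CochainComplex.HomComplex

noncomputable section

universe u

variable {k : Type u} [CommRing k] {S : Type u}

variable {𝒞 : Type (u + 1)} [Category.{u} 𝒞] [HasLimits 𝒞] [HasColimits 𝒞]
  (F : DGS k S ⥤ 𝒞) (U : 𝒞 ⥤ DGS k S) (adj : F ⊣ U)

section
variable {A Y : 𝒞} (r : A ⟶ Y)

/-- The submodule of "cycles of `Cone((U r)[-1])`" in component `x`, degree `n`:
pairs `(u, y)` with `u ∈ (U A)(x)^n`, `y ∈ (U Y)(x)^{n-1}`, `d u = 0` and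
`(U r)(u) = d y`. -/
def cyclePairs (x : S) (n : ℤ) :
    Submodule k (((U.obj A) x).X n × ((U.obj Y) x).X (n - 1)) where
  carrier := {p | ((U.obj A) x).d n (n + 1) p.1 = 0 ∧
    ((U.map r) x).f n p.1 = ((U.obj Y) x).d (n - 1) n p.2}
  add_mem' := by
    rintro p q ⟨hp1, hp2⟩ ⟨hq1, hq2⟩
    exact ⟨by simp [map_add, hp1, hq1], by simp [map_add, hp2, hq2]⟩
  zero_mem' := by simp
  smul_mem' := by
    rintro c p ⟨hp1, hp2⟩
    exact ⟨by simp [map_smul, hp1], by simp [map_smul, hp2]⟩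


section
variable {A Y : 𝒞} (r : A ⟶ Y)

/-- The complex of cycles of `Cone((U r)[-1])`, with zero differential. -/
def cyclesCone : DGS k S := fun x =>
  { X := fun n => ModuleCat.of k (cyclePairs U r x n)
    d := fun _ _ => 0
    shape := fun _ _ _ => rfl
    d_comp_d' := by intros; simp }

/-- The chain map `pr₁ : N ⟶ U A`, projection to the first component. -/
def prOne : cyclesCone U r ⟶ U.obj A := fun x =>
  { f := fun n => ModuleCat.ofHom ((LinearMap.fst k _ _).comp (cyclePairs U r x n).subtype)
    comm' := by
      rintro n m (rfl : n + 1 = m)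
      ext ⟨p, hp⟩
      dsimp [cyclesCone]
      exact hp.1 }

/-- The degree `-1` family of maps `t : N → U Y`, projection to the second component. -/
def prTwoT (x : S) : Cochain ((cyclesCone U r) x) ((U.obj Y) x) (-1) :=
  Cochain.mk (fun p q hpq =>
    ModuleCat.ofHom ((LinearMap.snd k _ _).comp (cyclePairs U r x p).subtype) ≫
      (((U.obj Y) x).XIsoOfEq (show p - 1 = q by omega)).hom)

end

end

section

omit [HasLimits 𝒞] [HasColimits 𝒞]

lemma CochainComplex.mappingCone.δ_inl_comp_ofHom_s10 {C : Type*} [Category C] [Preadditive C]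
    {K L E : CochainComplex C ℤ} (φ : K ⟶ L) [HomologicalComplex.HasHomotopyCofiber φ]
    (ψ : mappingCone φ ⟶ E) :
    δ (-1) 0 ((inl φ).comp (Cochain.ofHom ψ) (add_zero (-1))) =
      Cochain.ofHom (φ ≫ inr φ ≫ ψ) := by
  simp [δ_comp_zero_cochain _ _ _ (neg_add_cancel 1)]

lemma DGS.isNullHomotopy_iff_of_d_eq_zero {M B : DGS k S}
    (hM : ∀ (x : S) (n : ℤ), (M x).d n (n + 1) = 0) (β : M ⟶ B)
    (t : ∀ x : S, Cochain (M x) (B x) (-1)) :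
    DGS.IsNullHomotopy β t ↔
      ∀ (x : S) (n : ℤ), (t x).v n (n - 1) (by omega) ≫ (B x).d (n - 1) n = (β x).f n := by
  have hδ : ∀ (x : S) (n : ℤ), (δ (-1) 0 (t x)).v n n (add_zero n) =
      (t x).v n (n - 1) (by omega) ≫ (B x).d (n - 1) n := by
    intro x n
    rw [δ_v (-1) 0 (by omega) _ n n (add_zero n) (n - 1) (n + 1) (by omega) rfl, hM, zero_comp,
      smul_zero, add_zero]
  refine forall_congr' fun x => ⟨fun h n => ?_, fun h => Cochain.ext₀ _ _ fun n => ?_⟩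
  · rw [← hδ, h, Cochain.ofHom_v]
  · rw [hδ, h, Cochain.ofHom_v]

lemma prTwoT_v_apply {A Y : 𝒞} (r : A ⟶ Y) (x : S) (n : ℤ) (p : cyclePairs U r x n) :
    (prTwoT U r x).v n (n - 1) (by omega) p = p.1.2 :=
  rfl

lemma prTwoT_isNullHomotopy {A Y : 𝒞} (r : A ⟶ Y) :
    DGS.IsNullHomotopy (prOne U r ≫ U.map r) (prTwoT U r) := by
  refine (DGS.isNullHomotopy_iff_of_d_eq_zero (fun _ _ => rfl) _ _).2 fun x n => ?_
  ext ⟨⟨u, y⟩, -, hy⟩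
  exact hy.symm

variable {M : DGS k S} {A D : 𝒞} {α : M ⟶ U.obj A}

lemma theta_comp_ofHom (g : F.obj (DGS.coneFun α) ⟶ D) {B : 𝒞} (q : D ⟶ B) (x : S) :
    (theta F U adj α g x).comp (Cochain.ofHom ((U.map q) x)) (add_zero (-1)) =
      theta F U adj α (g ≫ q) x := by
  rw [theta, theta, Cochain.comp_assoc_of_second_is_zero_cochain, U.map_comp]
  exact congrArg (fun z => (mappingCone.inl (α x)).comp z (add_zero (-1)))
    (Cochain.ofHom_comp _ _).symm

lemma theta_map_comp_counit {B : 𝒞} (φ : DGS.coneFun α ⟶ U.obj B) (x : S) :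
    theta F U adj α (F.map φ ≫ adj.counit.app B) x =
      (mappingCone.inl (α x)).comp (Cochain.ofHom (φ x)) (add_zero (-1)) := by
  have h : adj.unit.app (DGS.coneFun α) ≫ U.map (F.map φ ≫ adj.counit.app B) = φ := by simp
  rw [theta, h]

variable {jbar : A ⟶ D} {g : F.obj (DGS.coneFun α) ⟶ D}
  (hpo : IsPushout (adj.counit.app A) (F.map (DGS.coneInr α)) jbar g)
include hpo

lemma coneInr_comp_unit_comp_map :
    DGS.coneInr α ≫ adj.unit.app (DGS.coneFun α) ≫ U.map g = U.map jbar := by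
  rw [← Category.assoc, ← adj.unit_naturality, Category.assoc, ← U.map_comp, ← hpo.w,
    U.map_comp, adj.right_triangle_components_assoc]

theorem theta_isNullHomotopy : DGS.IsNullHomotopy (α ≫ U.map jbar) (theta F U adj α g) := by
  intro x
  rw [← coneInr_comp_unit_comp_map F U adj hpo]
  exact mappingCone.δ_inl_comp_ofHom_s10 _ _

theorem exists_desc_of_isNullHomotopy {B : 𝒞} (f : A ⟶ B)
    {t : ∀ x : S, Cochain (M x) ((U.obj B) x) (-1)} (ht : DGS.IsNullHomotopy (α ≫ U.map f) t) :
    ∃ q : D ⟶ B, jbar ≫ q = f ∧ ∀ x : S,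
      (theta F U adj α g x).comp (Cochain.ofHom ((U.map q) x)) (add_zero (-1)) = t x := by
  let φ : DGS.coneFun α ⟶ U.obj B := fun x => mappingCone.desc (α x) (t x) ((U.map f) x) (ht x)
  have hφ : DGS.coneInr α ≫ φ = U.map f := funext fun x => mappingCone.inr_desc _ _ _ _
  have hw : adj.counit.app A ≫ f = F.map (DGS.coneInr α) ≫ F.map φ ≫ adj.counit.app B := by
    rw [← F.map_comp_assoc, hφ]
    exact (adj.counit_naturality f).symm
  refine ⟨hpo.desc f _ hw, hpo.inl_desc _ _ _, fun x => ?_⟩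
  rw [theta_comp_ofHom, hpo.inr_desc, theta_map_comp_counit]
  exact mappingCone.inl_desc _ _ _ _

end

section
variable {A Y : 𝒞} (r : A ⟶ Y) {D : 𝒞} (jbar : A ⟶ D)

/-- Proposition: for `r : A ⟶ Y`, `N` the (zero-differential) complex of cycles of
`Cone((U r)[-1])` and `D = A⟨N, pr₁⟩`: (1) the pair `(r, t)`, `t = pr₂`, is an element
of `h_{A,pr₁}(Y)`; (2) the corresponding morphism `q : D ⟶ Y` satisfies `j̄ ≫ q = r`;
(3) the chain map `Cone((U r)[-1]) ⟶ Cone((U q)[-1])` given by `U j̄` on the first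
summand and the identity on the second sends every cycle to a boundary. -/
theorem cyclesCone_pushout_properties
    (g : F.obj (DGS.coneFun (prOne U r)) ⟶ D)
    (hpo : IsPushout (adj.counit.app A) (F.map (DGS.coneInr (prOne U r))) jbar g) :
    DGS.IsNullHomotopy (prOne U r ≫ U.map r) (prTwoT U r) ∧
    ∃ q : D ⟶ Y, jbar ≫ q = r ∧
      (∀ x : S, (theta F U adj (prOne U r) g x).comp
          (Cochain.ofHom ((U.map q) x)) (add_zero (-1)) = prTwoT U r x) ∧
      (∀ (x : S) (n : ℤ) (u : ((U.obj A) x).X n) (y : ((U.obj Y) x).X (n - 1)),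
        ((U.obj A) x).d n (n + 1) u = 0 →
        ((U.map r) x).f n u = ((U.obj Y) x).d (n - 1) n y →
        ∃ (a : ((U.obj D) x).X (n - 1)) (b : ((U.obj Y) x).X (n - 2)),
          ((U.obj D) x).d (n - 1) n a = ((U.map jbar) x).f n u ∧
          ((U.map q) x).f (n - 1) a - ((U.obj Y) x).d (n - 2) (n - 1) b = y) := by
  have ht := prTwoT_isNullHomotopy U r
  obtain ⟨q, hq, hθq⟩ := exists_desc_of_isNullHomotopy F U adj hpo r ht
  refine ⟨ht, q, hq, hθq, fun x n u y hu hy => ?_⟩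
  let p : cyclePairs U r x n := ⟨(u, y), hu, hy⟩
  refine ⟨(theta F U adj (prOne U r) g x).v n (n - 1) (by omega) p, 0, ?_, ?_⟩
  · have hθ := theta_isNullHomotopy F U adj hpo
    exact ConcreteCategory.congr_hom
      ((DGS.isNullHomotopy_iff_of_d_eq_zero (fun _ _ => rfl) _ _).1 hθ x n) p
  · rw [map_zero, sub_zero]
    have hqθ := ConcreteCategory.congr_hom (Cochain.congr_v (hθq x) n (n - 1) (by omega)) p
    rw [Cochain.comp_zero_cochain_v, Cochain.ofHom_v] at hqθ
    exact hqθ.trans (prTwoT_v_apply U r x n p)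

end
end
end
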